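/- arXiv:2212.04676 — 4 statements merged into one kernel-verified Lean document; each statement's English description precedes it below -/
import Mathlib

section
/- Let ν : ℝ³ → ℝ satisfy c₁(1+|v|)^γ ≤ ν(v) ≤ c₂(1+|v|)^γ for constants c₁, c₂ > 0 and -3 < γ < 0, and let r > 0 with r ≠ 1. Then there is a constant C_r > 0 such that for all v ∈ ℝ³ and all t ≥ 0, ∫₀ᵗ e^{-ν(v)(t-s)} ν(v) (1+s)^{-r} ds ≤ C_r (1+t)^{-min{r,1}}. -/
open Real MeasureTheory

lemma aux_rpow_int (a r : ℝ) (ha : 0 ≤ a) (hr1 : r ≠ 1) :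
    ∫ s in (0:ℝ)..a, (1+s) ^ (-r) = ((1+a) ^ (1-r) - 1) / (1-r) := by
  have h1 : ∫ s in (0:ℝ)..a, (1+s) ^ (-r) = ∫ x in (1:ℝ)..(1+a), x ^ (-r) := by
    simpa using intervalIntegral.integral_comp_add_left (fun x => x ^ (-r)) 1 (a := 0) (b := a)
  rw [h1, integral_rpow (Or.inr ⟨by simpa using fun h => hr1 (by linarith [h]), by
    rw [Set.uIcc_of_le (by linarith)]
    intro h
    exact absurd h.1 (by norm_num)⟩)]
  rw [Real.one_rpow]
  ring_nf

lemma aux_exp_int (c t : ℝ) :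
    ∫ s in (t/2)..t, Real.exp (-c * (t - s)) * c = 1 - Real.exp (-(c * (t/2))) := by
  have hd : ∀ s ∈ Set.uIcc (t/2) t, HasDerivAt (fun s => Real.exp (-c * (t - s)))
      (Real.exp (-c * (t - s)) * c) s := by
    intro s _
    have heq : (fun s : ℝ => -c * (t - s)) = (fun x : ℝ => c * x - c * t) := by
      funext x; ring
    have h1 : HasDerivAt (fun s : ℝ => -c * (t - s)) c s := by
      rw [heq]
      simpa using ((hasDerivAt_id s).const_mul c).sub_const (c * t)
    simpa [mul_comm] using h1.exp
  have hint : IntervalIntegrable (fun s => Real.exp (-c * (t - s)) * c) volume (t/2) t := by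
    apply Continuous.intervalIntegrable
    fun_prop
  rw [intervalIntegral.integral_eq_sub_of_hasDerivAt hd hint]
  have e1 : -c*(t-t) = 0 := by ring
  have e2 : -c*(t-t/2) = -(c*(t/2)) := by ring
  rw [e1, e2, Real.exp_zero]

/-- x * exp (-x) ≤ 1 for 0 ≤ x. -/
lemma aux_x_exp (x : ℝ) (hx : 0 ≤ x) : x * Real.exp (-x) ≤ 1 := by
  have h1 : x ≤ Real.exp x := (Real.add_one_le_exp x).trans' (by linarith)
  have h2 : 0 < Real.exp (-x) := Real.exp_pos _
  have := mul_le_mul_of_nonneg_right h1 h2.le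
  rwa [← Real.exp_add, add_neg_cancel, Real.exp_zero] at this

set_option maxHeartbeats 1000000 in
/-- Soft potential time-decay convolution lemma. -/
theorem soft_potential_convolution_decay
    (ν : EuclideanSpace ℝ (Fin 3) → ℝ) (c₁ c₂ γ r : ℝ)
    (hc₁ : 0 < c₁) (hc₂ : 0 < c₂) (hγ0 : -3 < γ) (hγ1 : γ < 0)
    (hr : 0 < r) (hr1 : r ≠ 1)
    (hν : ∀ v, c₁ * (1 + ‖v‖) ^ γ ≤ ν v ∧ ν v ≤ c₂ * (1 + ‖v‖) ^ γ) :
    ∃ C > 0, ∀ (v : EuclideanSpace ℝ (Fin 3)) (t : ℝ), 0 ≤ t →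
      (∫ s in (0:ℝ)..t, Real.exp (-(ν v) * (t - s)) * ν v * (1 + s) ^ (-r))
        ≤ C * (1 + t) ^ (-(min r 1)) := by
  have habs : 0 < |1 - r| := abs_pos.mpr (by intro h; exact hr1 (by linarith))
  refine ⟨2 * (c₂ + 1) / |1 - r| + 2 ^ r, by positivity, ?_⟩
  intro v t ht
  obtain ⟨h1, h2⟩ := hν v
  have hbase : (0:ℝ) < (1 + ‖v‖) ^ γ := rpow_pos_of_pos (by positivity) _
  have hνpos : 0 < ν v := lt_of_lt_of_le (by positivity) h1
  have hν2 : ν v ≤ c₂ := by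
    have : (1 + ‖v‖) ^ γ ≤ 1 :=
      rpow_le_one_of_one_le_of_nonpos (by simp [norm_nonneg]) hγ1.le
    nlinarith
  set m := min r 1 with hm
  have hm1 : m ≤ 1 := min_le_right _ _
  have hmr : m ≤ r := min_le_left _ _
  set f : ℝ → ℝ := fun s => Real.exp (-(ν v) * (t - s)) * ν v * (1 + s) ^ (-r) with hf
  -- continuity / integrability
  have hcont : ContinuousOn f (Set.Icc 0 t) := by
    apply ContinuousOn.mul
    · fun_prop
    · apply ContinuousOn.rpow_const
      · fun_prop
      · intro s hs; left; nlinarith [hs.1]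
  have hi1 : IntervalIntegrable f volume 0 (t/2) := by
    apply ContinuousOn.intervalIntegrable
    apply hcont.mono
    rw [Set.uIcc_of_le (by linarith)]
    exact Set.Icc_subset_Icc le_rfl (by linarith)
  have hi2 : IntervalIntegrable f volume (t/2) t := by
    apply ContinuousOn.intervalIntegrable
    apply hcont.mono
    rw [Set.uIcc_of_le (by linarith)]
    exact Set.Icc_subset_Icc (by linarith) le_rfl
  have hsplit : (∫ s in (0:ℝ)..t, f s) = (∫ s in (0:ℝ)..(t/2), f s) + ∫ s in (t/2)..t, f s :=
    (intervalIntegral.integral_add_adjacent_intervals hi1 hi2).symm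
  have ht1 : (1:ℝ) ≤ 1 + t := by linarith
  have htpos : (0:ℝ) < 1 + t := by linarith
  -- pointwise bound on the first piece
  have hpw1 : ∀ s ∈ Set.Icc (0:ℝ) (t/2),
      f s ≤ (2 * (c₂ + 1) / (1 + t)) * (1 + s) ^ (-r) := by
    intro s hs
    obtain ⟨hs0, hs2⟩ := hs
    have hτ : 0 ≤ t - s := by linarith
    have hrp : (0:ℝ) ≤ (1 + s) ^ (-r) := rpow_nonneg (by linarith) _
    have hkey : Real.exp (-(ν v) * (t - s)) * ν v ≤ 2 * (c₂ + 1) / (1 + t) := by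
      have hx := aux_x_exp (ν v * (t - s)) (by positivity)
      have he1 : Real.exp (-(ν v) * (t - s)) ≤ 1 := by
        apply Real.exp_le_one_iff.mpr; nlinarith
      have hne : Real.exp (-(ν v) * (t - s)) = Real.exp (-(ν v * (t - s))) := by ring_nf
      -- exp(-ντ) ν (1+τ) ≤ c₂ + 1
      have h3 : Real.exp (-(ν v) * (t - s)) * ν v * (1 + (t - s)) ≤ c₂ + 1 := by
        rw [hne]
        have he2 := (Real.exp_pos (-(ν v * (t - s)))).le
        rw [hne] at he1
        nlinarith [mul_comm (ν v * (t-s)) (Real.exp (-(ν v * (t-s))))]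
      have h9 : (0:ℝ) ≤ Real.exp (-(ν v) * (t - s)) * ν v := by positivity
      rw [le_div_iff₀ htpos]
      nlinarith [h3, h9, mul_nonneg h9 (by linarith : (0:ℝ) ≤ 2*(1+(t-s)) - (1+t))]
    calc f s = (Real.exp (-(ν v) * (t - s)) * ν v) * (1 + s) ^ (-r) := by rw [hf]
      _ ≤ (2 * (c₂ + 1) / (1 + t)) * (1 + s) ^ (-r) :=
          mul_le_mul_of_nonneg_right hkey hrp
  -- first piece
  have hInt1 : (∫ s in (0:ℝ)..(t/2), f s)
      ≤ (2 * (c₂ + 1) / |1 - r|) * (1 + t) ^ (-m) := by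
    have hgint : IntervalIntegrable (fun s => (2 * (c₂ + 1) / (1 + t)) * (1 + s) ^ (-r))
        volume 0 (t/2) := by
      apply ContinuousOn.intervalIntegrable
      apply ContinuousOn.mul continuousOn_const
      apply ContinuousOn.rpow_const
      · fun_prop
      · intro s hs
        rw [Set.uIcc_of_le (by linarith)] at hs
        left; nlinarith [hs.1]
    have hmono := intervalIntegral.integral_mono_on (by linarith) hi1 hgint hpw1
    rw [intervalIntegral.integral_const_mul] at hmono
    have hB : (∫ s in (0:ℝ)..(t/2), (1 + s) ^ (-r)) ≤ (1 / |1 - r|) * (1 + t) ^ (1 - m) := by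
      rw [aux_rpow_int (t/2) r (by linarith) hr1]
      rcases lt_or_gt_of_ne hr1 with hlt | hgt
      · -- r < 1 : m = r
        have hmr' : m = r := min_eq_left (by linarith)
        have habs' : |1 - r| = 1 - r := abs_of_pos (by linarith)
        have hb2 : (1 + t/2) ^ (1 - r) ≤ (1 + t) ^ (1 - r) :=
          rpow_le_rpow (by linarith) (by linarith) (by linarith)
        rw [habs', hmr']
        have hne : (1:ℝ) - r ≠ 0 := ne_of_gt (by linarith)
        rw [div_le_iff₀ (by linarith : (0:ℝ) < 1 - r)]
        have hq : 1 / (1-r) * (1 + t) ^ (1 - r) * (1 - r) = (1 + t) ^ (1-r) := by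
          field_simp
        rw [hq]
        linarith [hb2]
      · -- r > 1 : m = 1
        have hmr' : m = 1 := min_eq_right (by linarith)
        have habs' : |1 - r| = r - 1 := by rw [abs_of_neg (by linarith)]; ring
        have hb2 : (0:ℝ) < (1 + t/2) ^ (1 - r) := rpow_pos_of_pos (by linarith) _
        have hne : r - 1 ≠ 0 := ne_of_gt (by linarith)
        rw [hmr', habs', sub_self, rpow_zero, mul_one]
        rw [div_le_iff_of_neg (by linarith : (1:ℝ) - r < 0)]
        have hq : (1:ℝ) / (r - 1) * (1 - r) = -1 := by
          rw [div_mul_eq_mul_div, one_mul, div_eq_iff hne]; ring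
        rw [hq]
        linarith [hb2]
    have hC : 0 ≤ 2 * (c₂ + 1) / (1 + t) := by positivity
    have := hmono.trans (mul_le_mul_of_nonneg_left hB hC)
    calc (∫ s in (0:ℝ)..(t/2), f s)
        ≤ 2 * (c₂ + 1) / (1 + t) * (1 / |1 - r| * (1 + t) ^ (1 - m)) := this
      _ = (2 * (c₂ + 1) / |1 - r|) * ((1 + t) ^ (1 - m) / (1 + t) ^ (1:ℝ)) := by
          rw [rpow_one]; field_simp
      _ = (2 * (c₂ + 1) / |1 - r|) * (1 + t) ^ (-m) := by
          rw [← rpow_sub htpos]; norm_num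
  -- second piece
  have hInt2 : (∫ s in (t/2)..t, f s) ≤ 2 ^ r * (1 + t) ^ (-m) := by
    have hgint : IntervalIntegrable
        (fun s => Real.exp (-(ν v) * (t - s)) * ν v * (2 ^ r * (1 + t) ^ (-r)))
        volume (t/2) t := by
      apply Continuous.intervalIntegrable; fun_prop
    have hpw2 : ∀ s ∈ Set.Icc (t/2) t,
        f s ≤ Real.exp (-(ν v) * (t - s)) * ν v * (2 ^ r * (1 + t) ^ (-r)) := by
      intro s hs
      obtain ⟨hs1, hs2⟩ := hs
      have h5 : (0:ℝ) < (1 + t) / 2 := by linarith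
      have h6 : (1 + t) / 2 ≤ 1 + s := by linarith
      have h7 : (1 + s) ^ (-r) ≤ ((1 + t) / 2) ^ (-r) :=
        rpow_le_rpow_of_nonpos h5 h6 (by linarith)
      have h8 : ((1 + t) / 2) ^ (-r) = 2 ^ r * (1 + t) ^ (-r) := by
        rw [Real.div_rpow (by linarith) (by norm_num), Real.rpow_neg (by norm_num : (0:ℝ) ≤ 2)]
        field_simp
      have h9 : (0:ℝ) ≤ Real.exp (-(ν v) * (t - s)) * ν v := by positivity
      exact mul_le_mul_of_nonneg_left (h8 ▸ h7) h9
    have hmono := intervalIntegral.integral_mono_on (by linarith) hi2 hgint hpw2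
    rw [intervalIntegral.integral_mul_const, aux_exp_int (ν v) t] at hmono
    have hexp : (0:ℝ) < Real.exp (-(ν v * (t/2))) := Real.exp_pos _
    have hrp : (0:ℝ) ≤ 2 ^ r * (1 + t) ^ (-r) := by positivity
    have h10 : (1 - Real.exp (-(ν v * (t/2)))) * (2 ^ r * (1 + t) ^ (-r))
        ≤ 2 ^ r * (1 + t) ^ (-r) := by nlinarith
    have h11 : (2:ℝ) ^ r * (1 + t) ^ (-r) ≤ 2 ^ r * (1 + t) ^ (-m) := by
      apply mul_le_mul_of_nonneg_left _ (by positivity)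
      exact rpow_le_rpow_of_exponent_le ht1 (by linarith)
    exact hmono.trans (h10.trans h11)
  have hfin : (∫ s in (0:ℝ)..t, f s)
      ≤ (2 * (c₂ + 1) / |1 - r| + 2 ^ r) * (1 + t) ^ (-m) := by
    rw [hsplit, add_mul]
    exact add_le_add hInt1 hInt2
  exact hfin
end

section
/- Let 0 < r < 1 and 0 < q ≤ r. Then there is a constant C > 0 such that for all t ≥ 0, ∫₀ᵗ (1+t-s)^{-q} (1+s)^{-r} ds ≤ C (1+t)^{-q-r+1}. -/
open Real MeasureTheory

lemma aux_intble (p c : ℝ) (hc : 0 ≤ c) :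
    IntervalIntegrable (fun s : ℝ => (1 + s) ^ (-p)) volume 0 c := by
  apply ContinuousOn.intervalIntegrable
  apply ContinuousOn.rpow_const (by fun_prop)
  intro x hx
  left
  rw [Set.uIcc_of_le hc] at hx
  intro h
  linarith [hx.1]

lemma aux_int (p : ℝ) (hp : p < 1) (b : ℝ) (hb : 0 ≤ b) :
    ∫ s in (0:ℝ)..b, (1 + s) ^ (-p) = ((1 + b) ^ (1 - p) - 1) / (1 - p) := by
  have h1 : (∫ s in (0:ℝ)..b, (1 + s) ^ (-p))
      = ∫ u in (1:ℝ)..(1 + b), u ^ (-p) := by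
    simpa using intervalIntegral.integral_comp_add_left (a := (0:ℝ)) (b := b)
      (fun u => u ^ (-p)) 1
  rw [h1, integral_rpow]
  · rw [Real.one_rpow, show -p + 1 = 1 - p by ring]
  · right
    refine ⟨by intro h; linarith [neg_injective h ▸ hp], ?_⟩
    intro h
    rw [Set.uIcc_of_le (by linarith : (1:ℝ) ≤ 1 + b)] at h
    linarith [h.1]

lemma aux_le (p : ℝ) (hp : p < 1) (c : ℝ) (hc : 0 ≤ c) :
    ∫ s in (0:ℝ)..c, (1 + s) ^ (-p) ≤ (1 + c) ^ (1 - p) / (1 - p) := by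
  rw [aux_int p hp c hc]
  have h1 : (0:ℝ) < 1 - p := by linarith
  gcongr
  linarith

/-- Convolution decay estimate, case `r < 1`. -/
theorem convolution_decay_r_lt_one (q r : ℝ) (hr0 : 0 < r) (hr1 : r < 1)
    (hq : 0 < q) (hqr : q ≤ r) :
    ∃ C > 0, ∀ t : ℝ, 0 ≤ t →
      (∫ s in (0:ℝ)..t, (1 + (t - s)) ^ (-q) * (1 + s) ^ (-r))
        ≤ C * (1 + t) ^ (-q - r + 1) := by
  have hq1 : q < 1 := lt_of_le_of_lt hqr hr1
  have hr1' : (0:ℝ) < 1 - r := by linarith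
  have hq1' : (0:ℝ) < 1 - q := by linarith
  refine ⟨2 ^ q / (1 - r) + 2 ^ r / (1 - q),
    add_pos (div_pos (rpow_pos_of_pos two_pos q) hr1')
      (div_pos (rpow_pos_of_pos two_pos r) hq1'), ?_⟩
  intro t ht
  have ht1 : (0:ℝ) < 1 + t := by linarith
  set f : ℝ → ℝ := fun s => (1 + (t - s)) ^ (-q) * (1 + s) ^ (-r) with hf_def
  -- integrability of f on subintervals
  have hf : IntervalIntegrable f volume 0 t := by
    apply ContinuousOn.intervalIntegrable
    rw [Set.uIcc_of_le ht]
    apply ContinuousOn.mul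
    · apply ContinuousOn.rpow_const (by fun_prop)
      intro x hx
      left
      intro h
      linarith [hx.2]
    · apply ContinuousOn.rpow_const (by fun_prop)
      intro x hx
      left
      intro h
      linarith [hx.1]
  have hmem : t / 2 ∈ Set.uIcc (0:ℝ) t := by
    rw [Set.uIcc_of_le ht]
    constructor <;> linarith
  have hf1 : IntervalIntegrable f volume 0 (t/2) :=
    hf.mono_set (Set.uIcc_subset_uIcc Set.left_mem_uIcc hmem)
  have hf2 : IntervalIntegrable f volume (t/2) t :=
    hf.mono_set (Set.uIcc_subset_uIcc hmem Set.right_mem_uIcc)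
  have hsplit : (∫ s in (0:ℝ)..t, f s)
      = (∫ s in (0:ℝ)..(t/2), f s) + ∫ s in (t/2)..t, f s :=
    (intervalIntegral.integral_add_adjacent_intervals hf1 hf2).symm
  -- key rewriting for halves of base
  have hhalf : ((1 + t) / 2 : ℝ) ^ (-q) = 2 ^ q * (1 + t) ^ (-q) := by
    rw [Real.div_rpow (by linarith) (by norm_num), Real.rpow_neg (by norm_num : (0:ℝ) ≤ 2),
      div_eq_mul_inv, inv_inv, mul_comm]
  have hhalf' : ((1 + t) / 2 : ℝ) ^ (-r) = 2 ^ r * (1 + t) ^ (-r) := by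
    rw [Real.div_rpow (by linarith) (by norm_num), Real.rpow_neg (by norm_num : (0:ℝ) ≤ 2),
      div_eq_mul_inv, inv_inv, mul_comm]
  -- first half
  have hA : (∫ s in (0:ℝ)..(t/2), f s)
      ≤ 2 ^ q / (1 - r) * (1 + t) ^ (-q - r + 1) := by
    have hg1 : IntervalIntegrable (fun s : ℝ => 2 ^ q * (1 + t) ^ (-q) * (1 + s) ^ (-r))
        volume 0 (t/2) := (aux_intble r (t/2) (by linarith)).const_mul _
    have hb : ∀ s ∈ Set.Icc (0:ℝ) (t/2), f s ≤ 2 ^ q * (1 + t) ^ (-q) * (1 + s) ^ (-r) := by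
      intro s hs
      have h1 : (1 + t) / 2 ≤ 1 + (t - s) := by linarith [hs.2]
      have h2 : (1 + (t - s)) ^ (-q) ≤ ((1 + t) / 2) ^ (-q) :=
        Real.rpow_le_rpow_of_nonpos (by linarith) h1 (by linarith)
      rw [hhalf] at h2
      exact mul_le_mul_of_nonneg_right h2 (Real.rpow_nonneg (by linarith [hs.1]) _)
    calc (∫ s in (0:ℝ)..(t/2), f s)
        ≤ ∫ s in (0:ℝ)..(t/2), 2 ^ q * (1 + t) ^ (-q) * (1 + s) ^ (-r) :=
          intervalIntegral.integral_mono_on (by linarith) hf1 hg1 hb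
      _ = 2 ^ q * (1 + t) ^ (-q) * ∫ s in (0:ℝ)..(t/2), (1 + s) ^ (-r) := by
          rw [intervalIntegral.integral_const_mul]
      _ ≤ 2 ^ q * (1 + t) ^ (-q) * ((1 + t) ^ (1 - r) / (1 - r)) := by
          have hle := aux_le r hr1 (t/2) (by linarith)
          have hle2 : (1 + t/2 : ℝ) ^ (1 - r) ≤ (1 + t) ^ (1 - r) :=
            Real.rpow_le_rpow (by linarith) (by linarith) (by linarith)
          have : (∫ s in (0:ℝ)..(t/2), (1 + s) ^ (-r)) ≤ (1 + t) ^ (1 - r) / (1 - r) :=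
            hle.trans (by gcongr)
          have hnn : (0:ℝ) ≤ 2 ^ q * (1 + t) ^ (-q) := by positivity
          exact mul_le_mul_of_nonneg_left this hnn
      _ = 2 ^ q / (1 - r) * (1 + t) ^ (-q - r + 1) := by
          rw [show (-q - r + 1 : ℝ) = -q + (1 - r) by ring, Real.rpow_add ht1]
          ring
  -- second half
  have hB : (∫ s in (t/2)..t, f s)
      ≤ 2 ^ r / (1 - q) * (1 + t) ^ (-q - r + 1) := by
    have hg2 : IntervalIntegrable (fun s : ℝ => 2 ^ r * (1 + t) ^ (-r) * (1 + (t - s)) ^ (-q))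
        volume (t/2) t := by
      apply IntervalIntegrable.const_mul
      apply ContinuousOn.intervalIntegrable
      apply ContinuousOn.rpow_const (by fun_prop)
      intro x hx
      left
      rw [Set.uIcc_of_le (by linarith : t/2 ≤ t)] at hx
      intro h
      linarith [hx.2]
    have hb : ∀ s ∈ Set.Icc (t/2) t, f s ≤ 2 ^ r * (1 + t) ^ (-r) * (1 + (t - s)) ^ (-q) := by
      intro s hs
      have h1 : (1 + t) / 2 ≤ 1 + s := by linarith [hs.1]
      have h2 : (1 + s) ^ (-r) ≤ ((1 + t) / 2) ^ (-r) :=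
        Real.rpow_le_rpow_of_nonpos (by linarith) h1 (by linarith)
      rw [hhalf'] at h2
      calc f s ≤ (1 + (t - s)) ^ (-q) * (2 ^ r * (1 + t) ^ (-r)) :=
            mul_le_mul_of_nonneg_left h2 (Real.rpow_nonneg (by linarith [hs.2]) _)
        _ = 2 ^ r * (1 + t) ^ (-r) * (1 + (t - s)) ^ (-q) := by ring
    have hsub : (∫ s in (t/2)..t, (1 + (t - s)) ^ (-q))
        = ∫ u in (0:ℝ)..(t/2), (1 + u) ^ (-q) := by
      have := intervalIntegral.integral_comp_sub_left (a := t/2) (b := t)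
        (fun u => (1 + u) ^ (-q)) t
      rw [this, show t - t = (0:ℝ) by ring, show t - t/2 = t/2 by ring]
    calc (∫ s in (t/2)..t, f s)
        ≤ ∫ s in (t/2)..t, 2 ^ r * (1 + t) ^ (-r) * (1 + (t - s)) ^ (-q) :=
          intervalIntegral.integral_mono_on (by linarith) hf2 hg2 hb
      _ = 2 ^ r * (1 + t) ^ (-r) * ∫ s in (t/2)..t, (1 + (t - s)) ^ (-q) := by
          rw [intervalIntegral.integral_const_mul]
      _ ≤ 2 ^ r * (1 + t) ^ (-r) * ((1 + t) ^ (1 - q) / (1 - q)) := by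
          rw [hsub]
          have hle := aux_le q hq1 (t/2) (by linarith)
          have hle2 : (1 + t/2 : ℝ) ^ (1 - q) ≤ (1 + t) ^ (1 - q) :=
            Real.rpow_le_rpow (by linarith) (by linarith) (by linarith)
          have : (∫ s in (0:ℝ)..(t/2), (1 + s) ^ (-q)) ≤ (1 + t) ^ (1 - q) / (1 - q) :=
            hle.trans (by gcongr)
          have hnn : (0:ℝ) ≤ 2 ^ r * (1 + t) ^ (-r) := by positivity
          exact mul_le_mul_of_nonneg_left this hnn
      _ = 2 ^ r / (1 - q) * (1 + t) ^ (-q - r + 1) := by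
          rw [show (-q - r + 1 : ℝ) = -r + (1 - q) by ring, Real.rpow_add ht1]
          ring
  calc (∫ s in (0:ℝ)..t, f s)
      = (∫ s in (0:ℝ)..(t/2), f s) + ∫ s in (t/2)..t, f s := hsplit
    _ ≤ 2 ^ q / (1 - r) * (1 + t) ^ (-q - r + 1) + 2 ^ r / (1 - q) * (1 + t) ^ (-q - r + 1) :=
        add_le_add hA hB
    _ = (2 ^ q / (1 - r) + 2 ^ r / (1 - q)) * (1 + t) ^ (-q - r + 1) := by ring
end

section
/- Let B(v-u,θ) = |v-u|^γ b(θ) with -3 < γ ≤ 1 and 0 ≤ b(θ) ≤ C|cos θ|, and let χ_m be a smooth cutoff with χ_m(τ)=1 for τ ≤ m, χ_m(τ)=0 for τ ≥ 2m, 0 ≤ χ_m ≤ 1, where 0 < m ≤ 1. Define K^m f(v) = ∫_{ℝ³}∫_{S²} B(v-u,θ) χ_m(|v-u|) √μ(u) (√μ(u') f(v') + √μ(v') f(u') − √μ(v) f(u)) dω du, where (u',v') are post-collision velocities and μ is the standard Maxwellian. Then for -3 < γ < 0 there is a constant C independent of m such that |K^m f(v)| ≤ C m^{γ+3} e^{-|v|²/10}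 ‖f‖_{L^∞_v} for all v ∈ ℝ³. -/
open Real MeasureTheory
open scoped RealInnerProductSpace

/-- The Maxwellian on `ℝ³`. -/
noncomputable def maxwellian (v : EuclideanSpace ℝ (Fin 3)) : ℝ :=
  (2 * π) ^ (-(3:ℝ)/2) * Real.exp (-‖v‖^2 / 2)

/-- The near-singularity part `K^m` of the Grad-split operator `K`, for the cutoff
kernel `B(v-u,θ) = |v-u|^γ b(θ)` with `cos θ = (v-u)·ω/|v-u|` and a smooth radial
cutoff `χ_m(|v-u|)`.  The spherical integral is with respect to the surface measure
`volume.toSphere` on the unit sphere. -/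
noncomputable def Km (γ : ℝ) (b : ℝ → ℝ) (χ : ℝ → ℝ)
    (f : EuclideanSpace ℝ (Fin 3) → ℝ) (v : EuclideanSpace ℝ (Fin 3)) : ℝ :=
  ∫ u : EuclideanSpace ℝ (Fin 3),
    ∫ ω : Metric.sphere (0 : EuclideanSpace ℝ (Fin 3)) 1,
      ‖v - u‖ ^ γ * b (⟪v - u, (ω : EuclideanSpace ℝ (Fin 3))⟫ / ‖v - u‖) *
        χ ‖v - u‖ * Real.sqrt (maxwellian u) *
        (Real.sqrt (maxwellian (u + ⟪v - u, (ω : EuclideanSpace ℝ (Fin 3))⟫ •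
              (ω : EuclideanSpace ℝ (Fin 3)))) *
            f (v - ⟪v - u, (ω : EuclideanSpace ℝ (Fin 3))⟫ •
              (ω : EuclideanSpace ℝ (Fin 3)))
          + Real.sqrt (maxwellian (v - ⟪v - u, (ω : EuclideanSpace ℝ (Fin 3))⟫ •
              (ω : EuclideanSpace ℝ (Fin 3)))) *
            f (u + ⟪v - u, (ω : EuclideanSpace ℝ (Fin 3))⟫ •
              (ω : EuclideanSpace ℝ (Fin 3)))
          - Real.sqrt (maxwellian v) * f u)
        ∂((volume : Measure (EuclideanSpace ℝ (Fin 3))).toSphere)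

section KmAux

open Metric Set

lemma Km_aux_int (γ : ℝ) (hγ0 : -3 < γ) (hγ1 : γ < 0) (R : ℝ) (hR : 0 < R) :
    Integrable (fun z : EuclideanSpace ℝ (Fin 3) =>
      (Metric.closedBall (0 : EuclideanSpace ℝ (Fin 3)) R).indicator
        (fun z => ‖z‖ ^ γ) z) := by
  set E := EuclideanSpace ℝ (Fin 3) with hE
  set f : ℝ → ℝ := fun y => if y ≤ R then y ^ γ else 0 with hf
  have hfeq : ∀ z : E, (Metric.closedBall (0:E) R).indicator (fun z => ‖z‖ ^ γ) z = f ‖z‖ := by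
    intro z
    by_cases h : ‖z‖ ≤ R
    · rw [Set.indicator_of_mem (by simpa [Metric.mem_closedBall, dist_zero_right] using h)]
      simp [hf, h]
    · rw [Set.indicator_of_notMem (by simpa [Metric.mem_closedBall, dist_zero_right] using h)]
      simp [hf, h]
  refine (?_ : Integrable (fun z : E => f ‖z‖) volume).congr
    (Filter.Eventually.of_forall fun z => (hfeq z).symm)
  have hdim : Module.finrank ℝ E = 3 := finrank_euclideanSpace_fin
  -- integrability of the radial profile
  have hA : IntegrableOn (fun y : ℝ => f y * y ^ 2) (Ioi 0) := by
    have base : IntegrableOn (fun y : ℝ => y ^ (γ + 2)) (Ioc 0 R) := by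
      have h := intervalIntegral.intervalIntegrable_rpow' (a := 0) (b := R)
        (r := γ + 2) (by linarith)
      rwa [intervalIntegrable_iff_integrableOn_Ioc_of_le hR.le] at h
    have h1 : IntegrableOn (fun y : ℝ => f y * y ^ 2) (Ioc 0 R) := by
      refine base.congr_fun (fun y hy => ?_) measurableSet_Ioc
      have hy0 : (0:ℝ) < y := hy.1
      rw [hf]
      simp only [if_pos hy.2]
      rw [show ((y:ℝ) ^ 2 : ℝ) = y ^ (2:ℝ) by
          rw [← Real.rpow_natCast y 2]; norm_num,
        ← Real.rpow_add hy0]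
    have h2 : IntegrableOn (fun y : ℝ => f y * y ^ 2) (Ioi R) := by
      refine (integrable_zero _ _ _).integrableOn.congr_fun (fun y hy => ?_) measurableSet_Ioi
      rw [hf]
      simp [not_le.mpr (mem_Ioi.mp hy)]
    have hsplit : Ioc (0:ℝ) R ∪ Ioi R = Ioi 0 := Ioc_union_Ioi_eq_Ioi hR.le
    rw [← hsplit]
    exact h1.union h2
  -- Step B : integrability over volumeIoiPow 2
  have hVIP : Integrable (fun y : Ioi (0:ℝ) => f y) (Measure.volumeIoiPow 2) := by
    rw [Measure.volumeIoiPow]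
    rw [integrable_withDensity_iff (by fun_prop) (by
      refine Filter.Eventually.of_forall fun y => ENNReal.ofReal_lt_top)]
    have := (MeasurableEmbedding.subtype_coe
      (measurableSet_Ioi (a := (0:ℝ)))).integrableOn_iff_comap
      (f := fun y : ℝ => f y * y ^ 2) (μ := volume) (s := Ioi 0)
      (by rw [Subtype.range_coe]) |>.mp hA
    rw [show (Subtype.val : Ioi (0:ℝ) → ℝ) ⁻¹' Ioi 0 = univ by
      ext y; simpa using y.2, integrableOn_univ] at this
    refine this.congr (Filter.Eventually.of_forall fun y => ?_)
    simp only [Function.comp]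
    rw [ENNReal.toReal_ofReal (by positivity)]
  -- Step C : integrability over the product measure
  have hProd : Integrable (fun p : (Metric.sphere (0:E) 1) × (Ioi (0:ℝ)) => f p.2)
      (((volume : Measure E).toSphere).prod (Measure.volumeIoiPow 2)) := by
    simpa using (integrable_const (1:ℝ)).smul_prod hVIP
  -- Step D : transfer through the polar-coordinate homeomorphism
  have hcomap : Integrable (fun x : ({0}ᶜ : Set E) => f ‖(x : E)‖)
      ((volume : Measure E).comap Subtype.val) := by
    have hmp := (volume : Measure E).measurePreserving_homeomorphUnitSphereProd
    rw [hdim] at hmp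
    have := (hmp.integrable_comp_emb (Homeomorph.measurableEmbedding _)
      (g := fun p : (Metric.sphere (0:E) 1) × (Ioi (0:ℝ)) => f p.2)).mpr hProd
    refine this.congr (Filter.Eventually.of_forall fun x => ?_)
    simp [Function.comp]
  -- Step E : back to `E`
  have h0 : IntegrableOn (fun z : E => f ‖z‖) ({0}ᶜ) (volume : Measure E) := by
    rw [(MeasurableEmbedding.subtype_coe
      ((measurableSet_singleton (0:E)).compl)).integrableOn_iff_comap
      (by rw [Subtype.range_coe])]
    rw [show (Subtype.val : ({0}ᶜ : Set E) → E) ⁻¹' ({0}ᶜ) = univ by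
      ext x; simpa using x.2, integrableOn_univ]
    exact hcomap
  rwa [IntegrableOn, restrict_compl_singleton] at h0

lemma Km_sqrt_maxwellian_le (x : EuclideanSpace ℝ (Fin 3)) :
    Real.sqrt (maxwellian x) ≤ Real.sqrt ((2 * π) ^ (-(3:ℝ)/2)) := by
  apply Real.sqrt_le_sqrt
  unfold maxwellian
  nth_rewrite 2 [← mul_one ((2 * π) ^ (-(3:ℝ)/2))]
  gcongr
  rw [Real.exp_le_one_iff]
  nlinarith [sq_nonneg ‖x‖]

lemma Km_sqrt_maxwellian_decay {u v : EuclideanSpace ℝ (Fin 3)} (h : ‖v - u‖ ≤ 2) :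
    Real.sqrt (maxwellian u) ≤
      Real.sqrt ((2 * π) ^ (-(3:ℝ)/2)) * (Real.exp (2/3) * Real.exp (-‖v‖^2/10)) := by
  have hvu : ‖v‖ ≤ ‖u‖ + 2 := by
    calc ‖v‖ = ‖u + (v - u)‖ := by rw [add_sub_cancel]
    _ ≤ ‖u‖ + ‖v - u‖ := norm_add_le _ _
    _ ≤ ‖u‖ + 2 := by linarith
  have h1 : Real.sqrt (maxwellian u)
      = Real.sqrt ((2 * π) ^ (-(3:ℝ)/2)) * Real.exp ((-‖u‖^2/2)/2) := by
    unfold maxwellian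
    rw [Real.sqrt_mul (by positivity), ← Real.exp_half]
  rw [h1, ← Real.exp_add]
  gcongr
  · nlinarith [norm_nonneg u, norm_nonneg v, sq_nonneg (‖u‖ - 4/3)]

lemma Km_scale (γ : ℝ) (hγ0 : -3 < γ) (hγ1 : γ < 0) (m : ℝ) (hm : 0 < m) :
    ∫ z : EuclideanSpace ℝ (Fin 3),
        (closedBall (0:EuclideanSpace ℝ (Fin 3)) (2*m)).indicator (fun z => ‖z‖^γ) z
      = m ^ (γ + 3) *
        ∫ z : EuclideanSpace ℝ (Fin 3),
          (closedBall (0:EuclideanSpace ℝ (Fin 3)) 2).indicator (fun z => ‖z‖^γ) z := by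
  set E := EuclideanSpace ℝ (Fin 3) with hE
  have hdim : Module.finrank ℝ E = 3 := finrank_euclideanSpace_fin
  have key := Measure.integral_comp_smul_of_nonneg (μ := (volume : Measure E))
      (fun z => (closedBall (0:E) (2*m)).indicator (fun z => ‖z‖^γ) z) m (hR := hm.le)
  rw [hdim] at key
  have hptw : ∀ x : E, (closedBall (0:E) (2*m)).indicator (fun z => ‖z‖^γ) (m • x)
      = m ^ γ * (closedBall (0:E) 2).indicator (fun z => ‖z‖^γ) x := by
    intro x
    have hnorm : ‖m • x‖ = m * ‖x‖ := by
      rw [norm_smul, Real.norm_eq_abs, abs_of_pos hm]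
    by_cases hx : ‖x‖ ≤ 2
    · rw [Set.indicator_of_mem (by
        rw [mem_closedBall_zero_iff, hnorm]; nlinarith),
        Set.indicator_of_mem (mem_closedBall_zero_iff.mpr hx)]
      rw [hnorm, Real.mul_rpow hm.le (norm_nonneg x)]
    · rw [Set.indicator_of_notMem (by
        rw [mem_closedBall_zero_iff, hnorm]; push_neg at hx ⊢; nlinarith),
        Set.indicator_of_notMem (by rwa [mem_closedBall_zero_iff]), mul_zero]
  simp_rw [hptw] at key
  rw [integral_const_mul, smul_eq_mul] at key
  have hm3 : m ^ (γ + 3) = m ^ γ * m ^ (3:ℕ) := by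
    rw [Real.rpow_add hm, show ((3:ℝ)) = ((3:ℕ):ℝ) by norm_num, Real.rpow_natCast]
  rw [hm3]
  have hne : (m:ℝ) ^ (3:ℕ) ≠ 0 := by positivity
  field_simp at key ⊢
  linarith [key]

end KmAux

open Metric Set

/-- Smallness of the near-singularity part `K^m`: `|K^m f(v)| ≤ C m^{γ+3} e^{-|v|²/10} ‖f‖_∞`
with `C` independent of `m`. -/
theorem Km_smallness (γ Cb : ℝ) (hγ0 : -3 < γ) (hγ1 : γ < 0) (hCb : 0 ≤ Cb)
    (b : ℝ → ℝ) (hb0 : ∀ x, 0 ≤ b x) (hb1 : ∀ x, b x ≤ Cb * |x|) :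
    ∃ C > 0, ∀ m : ℝ, 0 < m → m ≤ 1 →
      ∀ χ : ℝ → ℝ, ContDiff ℝ (⊤ : ℕ∞) χ →
        (∀ τ, τ ≤ m → χ τ = 1) → (∀ τ, 2 * m ≤ τ → χ τ = 0) →
        (∀ τ, 0 ≤ χ τ ∧ χ τ ≤ 1) →
      ∀ (f : EuclideanSpace ℝ (Fin 3) → ℝ) (A : ℝ), (∀ u, |f u| ≤ A) →
        ∀ v : EuclideanSpace ℝ (Fin 3),
          |Km γ b χ f v| ≤ C * m ^ (γ + 3) * Real.exp (-‖v‖^2 / 10) * A := by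
  classical
  set E := EuclideanSpace ℝ (Fin 3) with hEdef
  set M0 : ℝ := Real.sqrt ((2 * π) ^ (-(3:ℝ)/2)) with hM0
  have hM0nn : 0 ≤ M0 := Real.sqrt_nonneg _
  set S : ℝ := (((volume : Measure E).toSphere) Set.univ).toReal with hSdef
  have hSnn : 0 ≤ S := ENNReal.toReal_nonneg
  set J : ℝ := ∫ z : E, (closedBall (0:E) 2).indicator (fun z => ‖z‖^γ) z with hJdef
  have hJnn : 0 ≤ J := integral_nonneg (fun z =>
    Set.indicator_nonneg (fun z _ => Real.rpow_nonneg (norm_nonneg z) γ) z)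
  refine ⟨S * Cb * (3 * M0 * (M0 * Real.exp (2/3))) * J + 1, by positivity, ?_⟩
  intro m hm hm1 χ hχsm hχ1 hχ2 hχb f A hfA v
  have hA : 0 ≤ A := le_trans (abs_nonneg _) (hfA 0)
  have hexp : (0:ℝ) < Real.exp (-‖v‖^2/10) := Real.exp_pos _
  set D : ℝ := M0 * Real.exp (2/3) * Real.exp (-‖v‖^2/10) with hDdef
  have hDnn : 0 ≤ D := by positivity
  set K2 : ℝ := Cb * D * (3 * M0 * A) with hK2def
  have hK2nn : 0 ≤ K2 := by positivity
  -- the inner (spherical) integral bound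
  have hinner : ∀ u : E,
      |∫ ω : Metric.sphere (0 : E) 1,
        ‖v - u‖ ^ γ * b (⟪v - u, (ω : E)⟫ / ‖v - u‖) *
          χ ‖v - u‖ * Real.sqrt (maxwellian u) *
          (Real.sqrt (maxwellian (u + ⟪v - u, (ω : E)⟫ • (ω : E))) *
              f (v - ⟪v - u, (ω : E)⟫ • (ω : E))
            + Real.sqrt (maxwellian (v - ⟪v - u, (ω : E)⟫ • (ω : E))) *
              f (u + ⟪v - u, (ω : E)⟫ • (ω : E))
            - Real.sqrt (maxwellian v) * f u)
          ∂((volume : Measure E).toSphere)|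
      ≤ S * K2 * (closedBall v (2*m)).indicator (fun u => ‖v - u‖ ^ γ) u := by
    intro u
    set a : ℝ := ‖v - u‖ ^ γ with hadef
    have hann : 0 ≤ a := Real.rpow_nonneg (norm_nonneg _) γ
    set cχ : ℝ := χ ‖v - u‖ with hcχ
    have hχnn : 0 ≤ cχ := (hχb _).1
    have hχle : cχ ≤ 1 := (hχb _).2
    set d : ℝ := Real.sqrt (maxwellian u) with hddef
    have hdnn : 0 ≤ d := Real.sqrt_nonneg _
    -- pointwise bound over the sphere
    have hptw : ∀ ω : Metric.sphere (0 : E) 1,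
        ‖(‖v - u‖ ^ γ * b (⟪v - u, (ω : E)⟫ / ‖v - u‖) *
          χ ‖v - u‖ * Real.sqrt (maxwellian u) *
          (Real.sqrt (maxwellian (u + ⟪v - u, (ω : E)⟫ • (ω : E))) *
              f (v - ⟪v - u, (ω : E)⟫ • (ω : E))
            + Real.sqrt (maxwellian (v - ⟪v - u, (ω : E)⟫ • (ω : E))) *
              f (u + ⟪v - u, (ω : E)⟫ • (ω : E))
            - Real.sqrt (maxwellian v) * f u))‖
        ≤ a * Cb * cχ * d * (3 * M0 * A) := by
      intro ω
      have hωn : ‖(ω : E)‖ = 1 := by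
        have := ω.2
        rwa [Metric.mem_sphere, dist_zero_right] at this
      have hc1 : |⟪v - u, (ω : E)⟫ / ‖v - u‖| ≤ 1 := by
        rw [abs_div, abs_norm]
        apply div_le_one_of_le₀ _ (norm_nonneg _)
        calc |⟪v - u, (ω : E)⟫| ≤ ‖v - u‖ * ‖(ω : E)‖ := abs_real_inner_le_norm _ _
        _ = ‖v - u‖ := by rw [hωn, mul_one]
      have hble : b (⟪v - u, (ω : E)⟫ / ‖v - u‖) ≤ Cb := by
        calc b (⟪v - u, (ω : E)⟫ / ‖v - u‖) ≤ Cb * |⟪v - u, (ω : E)⟫ / ‖v - u‖| := hb1 _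
        _ ≤ Cb * 1 := by gcongr
        _ = Cb := mul_one _
      have hQ : |Real.sqrt (maxwellian (u + ⟪v - u, (ω : E)⟫ • (ω : E))) *
              f (v - ⟪v - u, (ω : E)⟫ • (ω : E))
            + Real.sqrt (maxwellian (v - ⟪v - u, (ω : E)⟫ • (ω : E))) *
              f (u + ⟪v - u, (ω : E)⟫ • (ω : E))
            - Real.sqrt (maxwellian v) * f u| ≤ 3 * M0 * A := by
        have b1 : |Real.sqrt (maxwellian (u + ⟪v - u, (ω : E)⟫ • (ω : E))) *
            f (v - ⟪v - u, (ω : E)⟫ • (ω : E))| ≤ M0 * A := by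
          rw [abs_mul, abs_of_nonneg (Real.sqrt_nonneg _)]
          exact mul_le_mul (Km_sqrt_maxwellian_le _) (hfA _) (abs_nonneg _) hM0nn
        have b2 : |Real.sqrt (maxwellian (v - ⟪v - u, (ω : E)⟫ • (ω : E))) *
            f (u + ⟪v - u, (ω : E)⟫ • (ω : E))| ≤ M0 * A := by
          rw [abs_mul, abs_of_nonneg (Real.sqrt_nonneg _)]
          exact mul_le_mul (Km_sqrt_maxwellian_le _) (hfA _) (abs_nonneg _) hM0nn
        have b3 : |Real.sqrt (maxwellian v) * f u| ≤ M0 * A := by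
          rw [abs_mul, abs_of_nonneg (Real.sqrt_nonneg _)]
          exact mul_le_mul (Km_sqrt_maxwellian_le _) (hfA _) (abs_nonneg _) hM0nn
        set x := Real.sqrt (maxwellian (u + ⟪v - u, (ω : E)⟫ • (ω : E))) *
              f (v - ⟪v - u, (ω : E)⟫ • (ω : E)) with hx
        set y := Real.sqrt (maxwellian (v - ⟪v - u, (ω : E)⟫ • (ω : E))) *
              f (u + ⟪v - u, (ω : E)⟫ • (ω : E)) with hy
        set z := Real.sqrt (maxwellian v) * f u with hz
        have h1 : |x + y - z| ≤ |x + y| + |z| := abs_sub _ _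
        have h2 : |x + y| ≤ |x| + |y| := abs_add_le _ _
        linarith
      rw [Real.norm_eq_abs, abs_mul]
      have hPnn : 0 ≤ ‖v - u‖ ^ γ * b (⟪v - u, (ω : E)⟫ / ‖v - u‖) * χ ‖v - u‖ *
          Real.sqrt (maxwellian u) :=
        mul_nonneg (mul_nonneg (mul_nonneg hann (hb0 _)) hχnn) hdnn
      rw [abs_of_nonneg hPnn]
      have hPle : ‖v - u‖ ^ γ * b (⟪v - u, (ω : E)⟫ / ‖v - u‖) * χ ‖v - u‖ *
          Real.sqrt (maxwellian u) ≤ a * Cb * cχ * d := by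
        rw [hadef, hcχ, hddef]
        gcongr
      calc _ ≤ (a * Cb * cχ * d) * (3 * M0 * A) := by
            apply mul_le_mul hPle hQ (abs_nonneg _)
            positivity
      _ = a * Cb * cχ * d * (3 * M0 * A) := by ring
    have hstep : |∫ ω : Metric.sphere (0 : E) 1,
        ‖v - u‖ ^ γ * b (⟪v - u, (ω : E)⟫ / ‖v - u‖) *
          χ ‖v - u‖ * Real.sqrt (maxwellian u) *
          (Real.sqrt (maxwellian (u + ⟪v - u, (ω : E)⟫ • (ω : E))) *
              f (v - ⟪v - u, (ω : E)⟫ • (ω : E))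
            + Real.sqrt (maxwellian (v - ⟪v - u, (ω : E)⟫ • (ω : E))) *
              f (u + ⟪v - u, (ω : E)⟫ • (ω : E))
            - Real.sqrt (maxwellian v) * f u)
          ∂((volume : Measure E).toSphere)|
        ≤ S * (a * Cb * cχ * d * (3 * M0 * A)) := by
      rw [← Real.norm_eq_abs]
      calc _ ≤ ∫ _ω : Metric.sphere (0 : E) 1, (a * Cb * cχ * d * (3 * M0 * A))
              ∂((volume : Measure E).toSphere) :=
            norm_integral_le_of_norm_le (integrable_const _)
              (Filter.Eventually.of_forall hptw)
      _ = S * (a * Cb * cχ * d * (3 * M0 * A)) := by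
            rw [integral_const, smul_eq_mul, hSdef, measureReal_def]
    refine hstep.trans ?_
    by_cases hu : u ∈ closedBall v (2*m)
    · rw [Set.indicator_of_mem hu]
      have hvu2 : ‖v - u‖ ≤ 2 := by
        have : dist u v ≤ 2*m := mem_closedBall.mp hu
        rw [dist_eq_norm] at this
        rw [norm_sub_rev]
        nlinarith
      have hd : d ≤ D := by
        rw [hddef, hDdef]
        simpa [mul_assoc] using Km_sqrt_maxwellian_decay hvu2
      calc S * (a * Cb * cχ * d * (3 * M0 * A)) ≤ S * (a * Cb * 1 * D * (3 * M0 * A)) := by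
            gcongr
      _ = S * K2 * a := by rw [hK2def]; ring
    · rw [Set.indicator_of_notMem hu]
      have hχ0 : cχ = 0 := by
        apply hχ2
        have : 2*m < dist u v := by simpa [mem_closedBall, not_le] using hu
        rw [dist_eq_norm, ← norm_sub_rev] at this
        linarith
      rw [hχ0]
      simp
  -- the outer integral
  have hout_eq : ∀ u : E, (closedBall v (2*m)).indicator (fun u => ‖v - u‖ ^ γ) u
      = (closedBall (0:E) (2*m)).indicator (fun z => ‖z‖^γ) (v - u) := by
    intro u
    by_cases hu : u ∈ closedBall v (2*m)
    · rw [Set.indicator_of_mem hu, Set.indicator_of_mem]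
      rw [mem_closedBall_zero_iff, norm_sub_rev, ← dist_eq_norm]
      exact mem_closedBall.mp hu
    · rw [Set.indicator_of_notMem hu, Set.indicator_of_notMem]
      intro hmem
      apply hu
      rw [mem_closedBall_zero_iff, norm_sub_rev, ← dist_eq_norm] at hmem
      exact mem_closedBall.mpr hmem
  have hint0 : Integrable (fun z : E => (closedBall (0:E) (2*m)).indicator
      (fun z => ‖z‖^γ) z) := Km_aux_int γ hγ0 hγ1 (2*m) (by linarith)
  have hint : Integrable (fun u : E => S * K2 *
      (closedBall v (2*m)).indicator (fun u => ‖v - u‖ ^ γ) u) := by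
    simp_rw [hout_eq]
    exact ((integrable_comp_sub_left _ v).mpr hint0).const_mul _
  have hmain : |Km γ b χ f v| ≤ S * K2 * (m ^ (γ + 3) * J) := by
    rw [Km, ← Real.norm_eq_abs]
    calc _ ≤ ∫ u : E, S * K2 *
          (closedBall v (2*m)).indicator (fun u => ‖v - u‖ ^ γ) u :=
        norm_integral_le_of_norm_le hint (Filter.Eventually.of_forall (fun u => by
          rw [Real.norm_eq_abs]; exact hinner u))
    _ = S * K2 * ∫ u : E, (closedBall v (2*m)).indicator (fun u => ‖v - u‖ ^ γ) u := by
        rw [integral_const_mul]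
    _ = S * K2 * ∫ u : E, (closedBall (0:E) (2*m)).indicator (fun z => ‖z‖^γ) (v - u) := by
        simp_rw [hout_eq]
    _ = S * K2 * ∫ z : E, (closedBall (0:E) (2*m)).indicator (fun z => ‖z‖^γ) z := by
        rw [integral_sub_left_eq_self _ _ v]
    _ = S * K2 * (m ^ (γ + 3) * J) := by
        rw [Km_scale γ hγ0 hγ1 m hm, hJdef]
  refine hmain.trans ?_
  have ht : (0:ℝ) ≤ m ^ (γ+3) * Real.exp (-‖v‖^2/10) * A := by positivity
  calc S * K2 * (m ^ (γ + 3) * J)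
      = (S * Cb * (3 * M0 * (M0 * Real.exp (2/3))) * J) *
        (m ^ (γ+3) * Real.exp (-‖v‖^2/10) * A) := by
        rw [hK2def, hDdef]; ring
  _ ≤ (S * Cb * (3 * M0 * (M0 * Real.exp (2/3))) * J + 1) *
        (m ^ (γ+3) * Real.exp (-‖v‖^2/10) * A) := by
        apply mul_le_mul_of_nonneg_right _ ht
        linarith
  _ = (S * Cb * (3 * M0 * (M0 * Real.exp (2/3))) * J + 1) * m ^ (γ + 3) *
        Real.exp (-‖v‖^2 / 10) * A := by ring_nf
end

section
/- Let 0 < m ≤ 1 and suppose a symmetric kernel l : ℝ³ × ℝ³ → ℝ satisfies |l(v,η)| ≤ C |v-η|^γ e^{-|v|²/4} e^{-|η|²/4} + C_m |v-η|^{-(3-γ)/2} e^{-|v-η|²/16} e^{-||v|²-|η|²|²/(16|v-η|²)} with -3 < γ < 0. Then for every k ∈ ℝ there is a constant C_{m,k} such that for all v ∈ ℝ³: ∫_{ℝ³} |l(v,η)| ((1+|v|)/(1+|η|))^k e^{-|η|²/20} dη ≤ C_{m,k} e^{-|v|²/100}. -/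
open Real MeasureTheory Set

local notation "E3" => EuclideanSpace ℝ (Fin 3)

lemma coord_abs_le_norm (z : E3) (i : Fin 3) : |z i| ≤ ‖z‖ := by
  rw [EuclideanSpace.norm_eq]
  calc |z i| = Real.sqrt ((z i)^2) := (Real.sqrt_sq_eq_abs _).symm
    _ ≤ Real.sqrt (∑ j, ‖z j‖^2) := by
        apply Real.sqrt_le_sqrt
        have := Finset.single_le_sum (f := fun j => ‖z j‖^2)
          (fun j _ => sq_nonneg _) (Finset.mem_univ i)
        simpa [Real.norm_eq_abs, sq_abs] using this

lemma norm_sq_eq' (z : E3) : ‖z‖^2 = ∑ i, (z i)^2 := by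
  rw [EuclideanSpace.norm_eq, Real.sq_sqrt (by positivity)]
  simp [Real.norm_eq_abs, sq_abs]

lemma exp_norm_sq_prod (c : ℝ) (z : E3) :
    rexp (-c * ‖z‖^2) = ∏ i, rexp (-c * (z i)^2) := by
  rw [← Real.exp_sum]
  congr 1
  rw [norm_sq_eq', Finset.mul_sum]

lemma int1d {s c : ℝ} (hs : -1 < s) (hc : 0 < c) :
    Integrable (fun t : ℝ => |t| ^ s * rexp (-c * t^2)) := by
  have h0 : IntegrableOn (fun t : ℝ => |t| ^ s * rexp (-c * t ^ 2)) (Ioi 0) :=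
    (integrableOn_rpow_mul_exp_neg_mul_sq hc hs).congr_fun
      (fun x hx => by rw [abs_of_pos hx]) measurableSet_Ioi
  have h1 : IntegrableOn (fun t : ℝ => |t| ^ s * rexp (-c * t ^ 2)) (Iic 0) := by
    rw [← Measure.map_neg_eq_self (volume : Measure ℝ)]
    have m : MeasurableEmbedding (fun x : ℝ => -x) :=
      (Homeomorph.neg ℝ).measurableEmbedding
    rw [m.integrableOn_map_iff]
    simp only [Function.comp_def, abs_neg, neg_sq, neg_preimage, neg_Iic, neg_zero]
    exact Iff.mpr integrableOn_Ici_iff_integrableOn_Ioi h0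
  rw [← integrableOn_univ, ← Iic_union_Ioi (a := (0:ℝ)), integrableOn_union]
  exact ⟨h1, h0⟩

lemma euclid_prod_int {F : ℝ → ℝ} (hF : Integrable F) :
    Integrable (fun z : E3 => ∏ i, F (z i)) := by
  have h1 : Integrable (fun x : Fin 3 → ℝ => ∏ i, F (x i)) :=
    Integrable.fintype_prod (f := fun _ t => F t) (fun _ => hF)
  have h2 := EuclideanSpace.volume_preserving_symm_measurableEquiv_toLp (Fin 3)
  exact (h2.integrable_comp_emb
    (MeasurableEquiv.toLp 2 (Fin 3 → ℝ)).symm.measurableEmbedding).mpr h1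

lemma gauss_int {c : ℝ} (hc : 0 < c) :
    Integrable (fun z : E3 => rexp (-c * ‖z‖^2)) := by
  have h := euclid_prod_int (F := fun t => rexp (-c * t^2)) (integrable_exp_neg_mul_sq hc)
  exact h.congr (Filter.Eventually.of_forall (fun z => (exp_norm_sq_prod c z).symm))

lemma coord_ae : ∀ᵐ z : E3, ∀ i : Fin 3, z i ≠ 0 := by
  rw [ae_all_iff]
  intro i
  have hnull : volume {z : E3 | z i = 0} = 0 := by
    have hmp := EuclideanSpace.volume_preserving_symm_measurableEquiv_toLp (Fin 3)
    have hs : MeasurableSet {x : Fin 3 → ℝ | x i = 0} :=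
      measurableSet_eq_fun (measurable_pi_apply i) measurable_const
    have h := hmp.measure_preimage hs.nullMeasurableSet
    have hset : {z : E3 | z i = 0} =
        (MeasurableEquiv.toLp 2 (Fin 3 → ℝ)).symm ⁻¹' {x : Fin 3 → ℝ | x i = 0} := rfl
    rw [hset, h, volume_pi]
    exact Measure.pi_hyperplane _ i 0
  rw [ae_iff]
  simpa using hnull




lemma rpow_gauss_int {β c : ℝ} (hβ1 : -3 < β) (hβ2 : β < 0) (hc : 0 < c) :
    Integrable (fun z : E3 => ‖z‖ ^ β * rexp (-c * ‖z‖^2)) := by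
  have hF : Integrable (fun t : ℝ => |t| ^ (β/3) * rexp (-c * t^2)) :=
    int1d (by linarith) hc
  have hmaj : Integrable (fun z : E3 => ∏ i, (|z i| ^ (β/3) * rexp (-c * (z i)^2))) :=
    euclid_prod_int hF
  apply hmaj.mono' ?_ ?_
  · apply Measurable.aestronglyMeasurable
    exact (measurable_norm.pow measurable_const).mul
      (((measurable_norm.pow_const 2).const_mul (-c)).exp)
  · filter_upwards [coord_ae] with z hz
    have hP : ∀ i : Fin 3, 0 < |z i| := fun i => abs_pos.mpr (hz i)
    have hkey : ‖z‖ ^ β ≤ ∏ i, |z i| ^ (β/3) := by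
      have h1 : ∏ i, |z i| ^ (β/3) = (∏ i, |z i|) ^ (β/3) :=
        Real.finset_prod_rpow _ _ (fun i _ => abs_nonneg _) _
      have hPpos : 0 < ∏ i, |z i| := Finset.prod_pos fun i _ => hP i
      have hle : (∏ i, |z i|) ≤ ‖z‖ ^ (3:ℕ) := by
        calc (∏ i, |z i|) ≤ ∏ _i : Fin 3, ‖z‖ :=
              Finset.prod_le_prod (fun i _ => abs_nonneg _)
                (fun i _ => coord_abs_le_norm z i)
          _ = ‖z‖^(3:ℕ) := by simp [Finset.prod_const]
      have h2 : ((‖z‖^(3:ℕ) : ℝ)) ^ (β/3) ≤ (∏ i, |z i|) ^ (β/3) :=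
        Real.rpow_le_rpow_of_nonpos hPpos hle (by linarith)
      have h3 : ((‖z‖^(3:ℕ) : ℝ)) ^ (β/3) = ‖z‖ ^ β := by
        rw [← Real.rpow_natCast ‖z‖ 3, ← Real.rpow_mul (norm_nonneg z)]
        congr 1
        ring
      rw [h1, ← h3]
      exact h2
    have hnn : (0:ℝ) ≤ ‖z‖ ^ β * rexp (-c * ‖z‖^2) := by positivity
    rw [Real.norm_of_nonneg hnn, Finset.prod_mul_distrib, ← exp_norm_sq_prod c z]
    exact mul_le_mul_of_nonneg_right hkey (Real.exp_pos _).le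

lemma pg {w c : ℝ} (hw : 0 ≤ w) (hc : 0 < c) {t : ℝ} (ht : 0 ≤ t) :
    (1 + t) ^ w ≤ rexp (w^2/(4*c)) * rexp (c * t^2) := by
  have h1 : (1+t)^w = rexp (Real.log (1+t) * w) := by
    rw [Real.rpow_def_of_pos (by linarith)]
  rw [h1, ← Real.exp_add]
  apply Real.exp_le_exp.mpr
  have h2 : Real.log (1+t) ≤ t := by
    have := Real.log_le_sub_one_of_pos (x := 1+t) (by linarith)
    linarith
  have h3 : Real.log (1+t) * w ≤ t * w := mul_le_mul_of_nonneg_right h2 hw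
  have key : t * w ≤ w^2/(4*c) + c*t^2 := by
    rw [← sub_nonneg]
    have heq : w^2/(4*c) + c*t^2 - t*w = (w - 2*c*t)^2/(4*c) := by
      field_simp
      ring
    rw [heq]
    positivity
  linarith

lemma weight_le (k : ℝ) (v η : E3) :
    ((1 + ‖v‖) / (1 + ‖η‖)) ^ k ≤ (1 + ‖v - η‖) ^ |k| := by
  have h1 : (0:ℝ) < 1 + ‖v‖ := by positivity
  have h2 : (0:ℝ) < 1 + ‖η‖ := by positivity
  have hz : (0:ℝ) ≤ ‖v - η‖ := norm_nonneg _
  have ha : ‖v‖ - ‖η‖ ≤ ‖v - η‖ := norm_sub_norm_le v η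
  have hb : ‖η‖ - ‖v‖ ≤ ‖v - η‖ := by
    have := norm_sub_norm_le η v
    rwa [norm_sub_rev] at this
  rcases le_or_gt 0 k with hk | hk
  · rw [abs_of_nonneg hk]
    apply Real.rpow_le_rpow (by positivity) ?_ hk
    rw [div_le_iff₀ h2]
    nlinarith [norm_nonneg η, norm_nonneg v]
  · rw [abs_of_neg hk]
    have hrw : (1 + ‖v‖) / (1 + ‖η‖) = ((1 + ‖η‖) / (1 + ‖v‖))⁻¹ := by
      rw [inv_div]
    rw [hrw, Real.inv_rpow (by positivity), ← Real.rpow_neg (by positivity)]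
    apply Real.rpow_le_rpow (by positivity) ?_ (by linarith)
    rw [div_le_iff₀ h1]
    nlinarith [norm_nonneg η, norm_nonneg v]




lemma conv_bound {β : ℝ} (hβ1 : -3 < β) (hβ2 : β < 0) :
    ∃ M : ℝ, 0 ≤ M ∧ ∀ v : E3,
      Integrable (fun η : E3 => ‖v - η‖ ^ β * rexp (-(1/40) * ‖η‖^2)) ∧
      (∫ η : E3, ‖v - η‖ ^ β * rexp (-(1/40) * ‖η‖^2)) ≤ M := by
  have hgauss : Integrable (fun η : E3 => rexp (-(1/40) * ‖η‖^2)) :=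
    gauss_int (by norm_num)
  have hh : Integrable (fun z : E3 => ‖z‖ ^ β * rexp (-(1/80) * ‖z‖^2)) :=
    rpow_gauss_int hβ1 hβ2 (by norm_num)
  refine ⟨rexp (1/80) * (∫ z : E3, ‖z‖ ^ β * rexp (-(1/80) * ‖z‖^2))
      + ∫ η : E3, rexp (-(1/40) * ‖η‖^2), ?_, fun v => ?_⟩
  · have h1 : 0 ≤ ∫ z : E3, ‖z‖ ^ β * rexp (-(1/80) * ‖z‖^2) :=
      integral_nonneg fun z => by positivity
    have h2 : 0 ≤ ∫ η : E3, rexp (-(1/40) * ‖η‖^2) :=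
      integral_nonneg fun η => (Real.exp_pos _).le
    positivity
  · have htrans : Integrable (fun η : E3 => ‖v - η‖ ^ β * rexp (-(1/80) * ‖v - η‖^2)) :=
      hh.comp_sub_left v
    set maj : E3 → ℝ := fun η =>
      rexp (1/80) * (‖v - η‖ ^ β * rexp (-(1/80) * ‖v - η‖^2)) + rexp (-(1/40) * ‖η‖^2)
      with hmajdef
    have hmaj : Integrable maj := (htrans.const_mul _).add hgauss
    have hle : ∀ η : E3, ‖v - η‖ ^ β * rexp (-(1/40) * ‖η‖^2) ≤ maj η := by
      intro η
      rcases le_or_gt (‖v - η‖) 1 with h | h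
      · have hb1 : ‖v - η‖ ^ β * rexp (-(1/40) * ‖η‖^2) ≤ ‖v - η‖ ^ β * 1 := by
          apply mul_le_mul_of_nonneg_left _ (Real.rpow_nonneg (norm_nonneg _) _)
          rw [Real.exp_le_one_iff]
          nlinarith [sq_nonneg ‖η‖]
        have hb2 : ‖v - η‖ ^ β * 1
            ≤ rexp (1/80) * (‖v - η‖ ^ β * rexp (-(1/80) * ‖v - η‖^2)) := by
          rw [mul_one]
          rw [show rexp (1/80) * (‖v - η‖ ^ β * rexp (-(1/80) * ‖v - η‖^2))
              = ‖v - η‖ ^ β * (rexp (1/80) * rexp (-(1/80) * ‖v - η‖^2)) by ring]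
          nth_rewrite 1 [show ‖v - η‖ ^ β = ‖v - η‖ ^ β * 1 by ring]
          apply mul_le_mul_of_nonneg_left _ (Real.rpow_nonneg (norm_nonneg _) _)
          rw [← Real.exp_add]
          apply Real.one_le_exp
          nlinarith [norm_nonneg (v - η)]
        have : (0:ℝ) ≤ rexp (-(1/40) * ‖η‖^2) := (Real.exp_pos _).le
        calc ‖v - η‖ ^ β * rexp (-(1/40) * ‖η‖^2)
            ≤ rexp (1/80) * (‖v - η‖ ^ β * rexp (-(1/80) * ‖v - η‖^2)) :=
              le_trans hb1 hb2
          _ ≤ maj η := by rw [hmajdef]; simp only []; linarith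
      · have hb1 : ‖v - η‖ ^ β ≤ 1 :=
          Real.rpow_le_one_of_one_le_of_nonpos h.le hβ2.le
        have : ‖v - η‖ ^ β * rexp (-(1/40) * ‖η‖^2) ≤ rexp (-(1/40) * ‖η‖^2) := by
          nth_rewrite 2 [show rexp (-(1/40) * ‖η‖^2) = 1 * rexp (-(1/40) * ‖η‖^2) by ring]
          exact mul_le_mul_of_nonneg_right hb1 (Real.exp_pos _).le
        have h0 : (0:ℝ) ≤ rexp (1/80) * (‖v - η‖ ^ β * rexp (-(1/80) * ‖v - η‖^2)) := by
          positivity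
        calc ‖v - η‖ ^ β * rexp (-(1/40) * ‖η‖^2) ≤ rexp (-(1/40) * ‖η‖^2) := this
          _ ≤ maj η := by rw [hmajdef]; simp only []; linarith
    have hmeas : AEStronglyMeasurable
        (fun η : E3 => ‖v - η‖ ^ β * rexp (-(1/40) * ‖η‖^2)) volume := by
      apply Measurable.aestronglyMeasurable
      exact ((measurable_const.sub measurable_id).norm.pow measurable_const).mul
        (((measurable_norm.pow_const 2).const_mul (-(1/40))).exp)
    have hint : Integrable (fun η : E3 => ‖v - η‖ ^ β * rexp (-(1/40) * ‖η‖^2)) := by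
      apply hmaj.mono' hmeas
      filter_upwards with η
      rw [Real.norm_of_nonneg (by positivity)]
      exact hle η
    refine ⟨hint, ?_⟩
    calc (∫ η : E3, ‖v - η‖ ^ β * rexp (-(1/40) * ‖η‖^2))
        ≤ ∫ η : E3, maj η := integral_mono hint hmaj hle
      _ = rexp (1/80) * (∫ η : E3, ‖v - η‖ ^ β * rexp (-(1/80) * ‖v - η‖^2))
          + ∫ η : E3, rexp (-(1/40) * ‖η‖^2) := by
          rw [hmajdef, integral_add (htrans.const_mul _) hgauss, integral_const_mul]
      _ = rexp (1/80) * (∫ z : E3, ‖z‖ ^ β * rexp (-(1/80) * ‖z‖^2))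
          + ∫ η : E3, rexp (-(1/40) * ‖η‖^2) := by
          rw [integral_sub_left_eq_self
            (fun z : E3 => ‖z‖ ^ β * rexp (-(1/80) * ‖z‖^2)) volume v]




set_option maxHeartbeats 1000000 in
/-- Weighted Gaussian-decay estimate for the regular part `K^c` of the
Grad-split linearized Boltzmann operator with soft potentials. -/
theorem Kc_kernel_gaussian_decay (γ m C₀ Cm : ℝ)
    (hγ0 : -3 < γ) (hγ1 : γ < 0) (hm0 : 0 < m) (hm1 : m ≤ 1)
    (hC₀ : 0 ≤ C₀) (hCm : 0 ≤ Cm)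
    (l : EuclideanSpace ℝ (Fin 3) → EuclideanSpace ℝ (Fin 3) → ℝ)
    (hsymm : ∀ v η, l v η = l η v)
    (hbound : ∀ v η, |l v η| ≤
      C₀ * ‖v - η‖ ^ γ * Real.exp (-‖v‖^2 / 4) * Real.exp (-‖η‖^2 / 4)
      + Cm * ‖v - η‖ ^ (-(3 - γ)/2) * Real.exp (-‖v - η‖^2 / 16) *
          Real.exp (-(|‖v‖^2 - ‖η‖^2|)^2 / (16 * ‖v - η‖^2))) :
    ∀ k : ℝ, ∃ C > 0, ∀ v : EuclideanSpace ℝ (Fin 3),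
      (∫ η : EuclideanSpace ℝ (Fin 3),
        |l v η| * ((1 + ‖v‖) / (1 + ‖η‖)) ^ k * Real.exp (-‖η‖^2 / 20))
          ≤ C * Real.exp (-‖v‖^2 / 100) := by
  intro k
  have hβ1 : -3 < -(3 - γ)/2 := by linarith
  have hβ2 : -(3 - γ)/2 < 0 := by linarith
  obtain ⟨Mγ, hMγ0, hMγ⟩ := conv_bound hγ0 hγ1
  obtain ⟨Mβ, hMβ0, hMβ⟩ := conv_bound hβ1 hβ2
  set w : ℝ := |k| with hwdef
  have hw : 0 ≤ w := abs_nonneg k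
  set A : ℝ := rexp (w^2/(4*(1/32))) with hAdef
  have hA0 : 0 < A := Real.exp_pos _
  set D : ℝ := C₀ * A^2 + Cm * A with hDdef
  have hD0 : 0 ≤ D :=
    add_nonneg (mul_nonneg hC₀ (by positivity)) (mul_nonneg hCm hA0.le)
  have hMsum : 0 ≤ Mγ + Mβ := add_nonneg hMγ0 hMβ0
  refine ⟨D * (Mγ + Mβ) + 1, by nlinarith [mul_nonneg hD0 hMsum], fun v => ?_⟩
  have hv2 : ∀ η : E3, ‖v‖^2 ≤ 2*‖v - η‖^2 + 2*‖η‖^2 := by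
    intro η
    have h0 : ‖v‖ ≤ ‖v - η‖ + ‖η‖ := by
      calc ‖v‖ = ‖(v - η) + η‖ := by rw [sub_add_cancel]
        _ ≤ ‖v - η‖ + ‖η‖ := norm_add_le _ _
    nlinarith [sq_nonneg (‖v - η‖ - ‖η‖), norm_nonneg v, norm_nonneg (v - η), norm_nonneg η,
      mul_nonneg (norm_nonneg (v - η)) (norm_nonneg η)]
  -- pointwise key estimate
  have key : ∀ η : E3,
      |l v η| * ((1 + ‖v‖) / (1 + ‖η‖)) ^ k * Real.exp (-‖η‖^2 / 20)
      ≤ D * ((‖v - η‖ ^ γ + ‖v - η‖ ^ (-(3 - γ)/2)) * rexp (-(1/40) * ‖η‖^2))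
          * rexp (-‖v‖^2/100) := by
    intro η
    have hrγ : (0:ℝ) ≤ ‖v - η‖ ^ γ := Real.rpow_nonneg (norm_nonneg _) _
    have hrβ : (0:ℝ) ≤ ‖v - η‖ ^ (-(3 - γ)/2) := Real.rpow_nonneg (norm_nonneg _) _
    have hT1nn : (0:ℝ) ≤ C₀ * ‖v - η‖ ^ γ * rexp (-‖v‖^2 / 4) * rexp (-‖η‖^2 / 4) :=
      mul_nonneg (mul_nonneg (mul_nonneg hC₀ hrγ) (Real.exp_pos _).le) (Real.exp_pos _).le
    have hT2'nn : (0:ℝ) ≤ Cm * ‖v - η‖ ^ (-(3 - γ)/2) * rexp (-‖v - η‖^2 / 16) :=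
      mul_nonneg (mul_nonneg hCm hrβ) (Real.exp_pos _).le
    have hT2nn : (0:ℝ) ≤ Cm * ‖v - η‖ ^ (-(3 - γ)/2) * rexp (-‖v - η‖^2 / 16) *
        rexp (-(|‖v‖^2 - ‖η‖^2|)^2 / (16 * ‖v - η‖^2)) :=
      mul_nonneg hT2'nn (Real.exp_pos _).le
    have hW := weight_le k v η
    have hWnn : (0:ℝ) ≤ ((1 + ‖v‖) / (1 + ‖η‖)) ^ k :=
      Real.rpow_nonneg (by positivity) _
    have hl := hbound v η
    have hsplit : (1 + ‖v - η‖) ^ w ≤ (1 + ‖v‖) ^ w * (1 + ‖η‖) ^ w := by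
      rw [← Real.mul_rpow (by positivity) (by positivity)]
      apply Real.rpow_le_rpow (by positivity) ?_ hw
      nlinarith [norm_sub_le v η, norm_nonneg v, norm_nonneg η,
        mul_nonneg (norm_nonneg v) (norm_nonneg η)]
    have hpgv : (1 + ‖v‖) ^ w ≤ A * rexp ((1/32) * ‖v‖^2) :=
      pg hw (by norm_num) (norm_nonneg v)
    have hpgη : (1 + ‖η‖) ^ w ≤ A * rexp ((1/32) * ‖η‖^2) :=
      pg hw (by norm_num) (norm_nonneg η)
    have hpgz : (1 + ‖v - η‖) ^ w ≤ A * rexp ((1/32) * ‖v - η‖^2) :=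
      pg hw (by norm_num) (norm_nonneg (v - η))
    have hE : rexp (-(|‖v‖^2 - ‖η‖^2|)^2 / (16 * ‖v - η‖^2)) ≤ 1 := by
      rw [Real.exp_le_one_iff]
      rw [neg_div]
      apply neg_nonpos.mpr
      apply div_nonneg (sq_nonneg _) (by positivity)
    have hpownn : (0:ℝ) ≤ (1 + ‖v - η‖) ^ w := Real.rpow_nonneg (by positivity) _
    -- step 1
    have step1 : |l v η| * ((1 + ‖v‖) / (1 + ‖η‖)) ^ k * Real.exp (-‖η‖^2 / 20)
        ≤ (C₀ * ‖v - η‖ ^ γ * rexp (-‖v‖^2 / 4) * rexp (-‖η‖^2 / 4)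
            + Cm * ‖v - η‖ ^ (-(3 - γ)/2) * rexp (-‖v - η‖^2 / 16) *
              rexp (-(|‖v‖^2 - ‖η‖^2|)^2 / (16 * ‖v - η‖^2)))
            * (1 + ‖v - η‖) ^ w * Real.exp (-‖η‖^2 / 20) :=
      mul_le_mul_of_nonneg_right
        (mul_le_mul hl hW hWnn (le_trans (abs_nonneg _) hl)) (Real.exp_pos _).le
    -- bound for term 1
    have B1 : C₀ * ‖v - η‖ ^ γ * rexp (-‖v‖^2 / 4) * rexp (-‖η‖^2 / 4)
          * (1 + ‖v - η‖) ^ w * Real.exp (-‖η‖^2 / 20)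
        ≤ (C₀ * A^2) * (‖v - η‖ ^ γ * rexp (-(1/40) * ‖η‖^2)) * rexp (-‖v‖^2/100) := by
      calc C₀ * ‖v - η‖ ^ γ * rexp (-‖v‖^2 / 4) * rexp (-‖η‖^2 / 4)
            * (1 + ‖v - η‖) ^ w * Real.exp (-‖η‖^2 / 20)
          ≤ C₀ * ‖v - η‖ ^ γ * rexp (-‖v‖^2 / 4) * rexp (-‖η‖^2 / 4)
            * ((A * rexp ((1/32) * ‖v‖^2)) * (A * rexp ((1/32) * ‖η‖^2)))
            * Real.exp (-‖η‖^2 / 20) := by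
            apply mul_le_mul_of_nonneg_right _ (Real.exp_pos _).le
            apply mul_le_mul_of_nonneg_left _ hT1nn
            exact le_trans hsplit
              (mul_le_mul hpgv hpgη (Real.rpow_nonneg (by positivity) _) (by positivity))
        _ = (C₀ * A^2) * ‖v - η‖ ^ γ
            * (rexp (-‖v‖^2 / 4) * rexp ((1/32) * ‖v‖^2))
            * (rexp (-‖η‖^2 / 4) * rexp ((1/32) * ‖η‖^2) * rexp (-‖η‖^2 / 20)) := by
            ring
        _ = (C₀ * A^2) * ‖v - η‖ ^ γ
            * rexp (-‖v‖^2 / 4 + (1/32) * ‖v‖^2)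
            * rexp (-‖η‖^2 / 4 + (1/32) * ‖η‖^2 + -‖η‖^2 / 20) := by
            rw [← Real.exp_add, ← Real.exp_add, ← Real.exp_add]
        _ ≤ (C₀ * A^2) * ‖v - η‖ ^ γ * rexp (-‖v‖^2/100) * rexp (-(1/40) * ‖η‖^2) := by
            apply mul_le_mul
            · apply mul_le_mul_of_nonneg_left _
                (mul_nonneg (mul_nonneg hC₀ (by positivity)) hrγ)
              apply Real.exp_le_exp.mpr
              nlinarith [sq_nonneg ‖v‖]
            · apply Real.exp_le_exp.mpr
              nlinarith [sq_nonneg ‖η‖]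
            · exact (Real.exp_pos _).le
            · exact mul_nonneg (mul_nonneg
                (mul_nonneg hC₀ (by positivity)) hrγ) (Real.exp_pos _).le
        _ = (C₀ * A^2) * (‖v - η‖ ^ γ * rexp (-(1/40) * ‖η‖^2)) * rexp (-‖v‖^2/100) := by
            ring
    -- bound for term 2
    have B2 : Cm * ‖v - η‖ ^ (-(3 - γ)/2) * rexp (-‖v - η‖^2 / 16) *
            rexp (-(|‖v‖^2 - ‖η‖^2|)^2 / (16 * ‖v - η‖^2))
          * (1 + ‖v - η‖) ^ w * Real.exp (-‖η‖^2 / 20)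
        ≤ (Cm * A) * (‖v - η‖ ^ (-(3 - γ)/2) * rexp (-(1/40) * ‖η‖^2))
            * rexp (-‖v‖^2/100) := by
      calc Cm * ‖v - η‖ ^ (-(3 - γ)/2) * rexp (-‖v - η‖^2 / 16) *
            rexp (-(|‖v‖^2 - ‖η‖^2|)^2 / (16 * ‖v - η‖^2))
            * (1 + ‖v - η‖) ^ w * Real.exp (-‖η‖^2 / 20)
          ≤ Cm * ‖v - η‖ ^ (-(3 - γ)/2) * rexp (-‖v - η‖^2 / 16) * 1
            * (A * rexp ((1/32) * ‖v - η‖^2)) * Real.exp (-‖η‖^2 / 20) := by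
            apply mul_le_mul_of_nonneg_right _ (Real.exp_pos _).le
            exact mul_le_mul (mul_le_mul_of_nonneg_left hE hT2'nn) hpgz hpownn
              (by rw [mul_one]; exact hT2'nn)
        _ = (Cm * A) * ‖v - η‖ ^ (-(3 - γ)/2)
            * (rexp (-‖v - η‖^2 / 16) * rexp ((1/32) * ‖v - η‖^2)
              * rexp (-‖η‖^2 / 20)) := by ring
        _ = (Cm * A) * ‖v - η‖ ^ (-(3 - γ)/2)
            * rexp (-‖v - η‖^2 / 16 + (1/32) * ‖v - η‖^2 + -‖η‖^2 / 20) := by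
            rw [← Real.exp_add, ← Real.exp_add]
        _ ≤ (Cm * A) * ‖v - η‖ ^ (-(3 - γ)/2)
            * rexp (-(1/40) * ‖η‖^2 + -‖v‖^2/100) := by
            apply mul_le_mul_of_nonneg_left _ (mul_nonneg (mul_nonneg hCm hA0.le) hrβ)
            apply Real.exp_le_exp.mpr
            nlinarith [hv2 η, sq_nonneg ‖v - η‖, sq_nonneg ‖η‖]
        _ = (Cm * A) * (‖v - η‖ ^ (-(3 - γ)/2) * rexp (-(1/40) * ‖η‖^2))
            * rexp (-‖v‖^2/100) := by
            rw [Real.exp_add]; ring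
    -- combine
    have hcomb : (C₀ * A^2) * (‖v - η‖ ^ γ * rexp (-(1/40) * ‖η‖^2)) * rexp (-‖v‖^2/100)
          + (Cm * A) * (‖v - η‖ ^ (-(3 - γ)/2) * rexp (-(1/40) * ‖η‖^2))
            * rexp (-‖v‖^2/100)
        ≤ D * ((‖v - η‖ ^ γ + ‖v - η‖ ^ (-(3 - γ)/2)) * rexp (-(1/40) * ‖η‖^2))
            * rexp (-‖v‖^2/100) := by
      have h1 : 0 ≤ (C₀ * A^2) * (‖v - η‖ ^ (-(3 - γ)/2) * rexp (-(1/40) * ‖η‖^2))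
          * rexp (-‖v‖^2/100) :=
        mul_nonneg (mul_nonneg (mul_nonneg hC₀ (by positivity))
          (mul_nonneg hrβ (Real.exp_pos _).le)) (Real.exp_pos _).le
      have h2 : 0 ≤ (Cm * A) * (‖v - η‖ ^ γ * rexp (-(1/40) * ‖η‖^2))
          * rexp (-‖v‖^2/100) :=
        mul_nonneg (mul_nonneg (mul_nonneg hCm hA0.le)
          (mul_nonneg hrγ (Real.exp_pos _).le)) (Real.exp_pos _).le
      rw [hDdef]
      nlinarith [h1, h2]
    calc |l v η| * ((1 + ‖v‖) / (1 + ‖η‖)) ^ k * Real.exp (-‖η‖^2 / 20)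
        ≤ (C₀ * ‖v - η‖ ^ γ * rexp (-‖v‖^2 / 4) * rexp (-‖η‖^2 / 4)
            + Cm * ‖v - η‖ ^ (-(3 - γ)/2) * rexp (-‖v - η‖^2 / 16) *
              rexp (-(|‖v‖^2 - ‖η‖^2|)^2 / (16 * ‖v - η‖^2)))
            * (1 + ‖v - η‖) ^ w * Real.exp (-‖η‖^2 / 20) := step1
      _ = C₀ * ‖v - η‖ ^ γ * rexp (-‖v‖^2 / 4) * rexp (-‖η‖^2 / 4)
            * (1 + ‖v - η‖) ^ w * Real.exp (-‖η‖^2 / 20)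
          + Cm * ‖v - η‖ ^ (-(3 - γ)/2) * rexp (-‖v - η‖^2 / 16) *
              rexp (-(|‖v‖^2 - ‖η‖^2|)^2 / (16 * ‖v - η‖^2))
            * (1 + ‖v - η‖) ^ w * Real.exp (-‖η‖^2 / 20) := by ring
      _ ≤ (C₀ * A^2) * (‖v - η‖ ^ γ * rexp (-(1/40) * ‖η‖^2)) * rexp (-‖v‖^2/100)
          + (Cm * A) * (‖v - η‖ ^ (-(3 - γ)/2) * rexp (-(1/40) * ‖η‖^2))
            * rexp (-‖v‖^2/100) := add_le_add B1 B2
      _ ≤ _ := hcomb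
  -- integral estimate
  have hγint := (hMγ v).1
  have hβint := (hMβ v).1
  have hgint : Integrable (fun η : E3 =>
      D * ((‖v - η‖ ^ γ + ‖v - η‖ ^ (-(3 - γ)/2)) * rexp (-(1/40) * ‖η‖^2))
        * rexp (-‖v‖^2/100)) := by
    have h := ((hγint.add hβint).const_mul D).mul_const (rexp (-‖v‖^2/100))
    apply h.congr
    filter_upwards with η
    simp only [Pi.add_apply]
    ring
  calc (∫ η : E3, |l v η| * ((1 + ‖v‖) / (1 + ‖η‖)) ^ k * Real.exp (-‖η‖^2 / 20))
      ≤ ∫ η : E3,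
          D * ((‖v - η‖ ^ γ + ‖v - η‖ ^ (-(3 - γ)/2)) * rexp (-(1/40) * ‖η‖^2))
            * rexp (-‖v‖^2/100) := by
        apply integral_mono_of_nonneg ?_ hgint (Filter.Eventually.of_forall key)
        filter_upwards with η
        positivity
    _ = (D * rexp (-‖v‖^2/100)) *
          ((∫ η : E3, ‖v - η‖ ^ γ * rexp (-(1/40) * ‖η‖^2))
            + ∫ η : E3, ‖v - η‖ ^ (-(3 - γ)/2) * rexp (-(1/40) * ‖η‖^2)) := by
        rw [← integral_add hγint hβint, ← integral_const_mul]
        congr 1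
        funext η
        ring
    _ ≤ (D * rexp (-‖v‖^2/100)) * (Mγ + Mβ) := by
        apply mul_le_mul_of_nonneg_left _ (mul_nonneg hD0 (Real.exp_pos _).le)
        exact add_le_add (hMγ v).2 (hMβ v).2
    _ ≤ (D * (Mγ + Mβ) + 1) * Real.exp (-‖v‖^2 / 100) := by
        have h1 : D * (Mγ + Mβ) ≤ D * (Mγ + Mβ) + 1 := by linarith
        calc (D * rexp (-‖v‖^2/100)) * (Mγ + Mβ)
            = (D * (Mγ + Mβ)) * rexp (-‖v‖^2/100) := by ring
          _ ≤ (D * (Mγ + Mβ) + 1) * rexp (-‖v‖^2/100) :=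
              mul_le_mul_of_nonneg_right h1 (Real.exp_pos _).le
end
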